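/- arXiv:math/0501046 — 6 statements merged into one kernel-verified Lean document; each statement's English description precedes it below -/
import Mathlib

section
/- If h is a reciprocal polynomial of degree n (i.e. h(t) = t^n h(1/t)) with coefficients in a field of characteristic zero, then there exists a unique polynomial γ of degree at most ⌊n/2⌋ such that h(t) = Σ_{i=0}^{⌊n/2⌋} γ_i t^i (1+t)^{n-2i}. Moreover, if h has integer coefficients then so does γ. -/
/-!
Peeling off the constant term: if `h` is reciprocal of degree `n + 2` then so is
`h - h₀ (1 + t)^(n + 2)`, whose constant and top coefficients vanish, so dividing it by `t` leaves a
reciprocal polynomial of degree `n`. Correspondingly `Σ γᵢ tⁱ (1+t)^(n+2-2i)` equals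
`γ₀ (1+t)^(n+2) + t · Σ γᵢ₊₁ tⁱ (1+t)^(n-2i)`, so existence and uniqueness of `γ` follow by induction
on `n` in steps of two, and `γ₀ = h₀` keeps every coefficient in any subring containing those of `h`.
-/

open Polynomial

/-- The expansion `∑ γᵢ tⁱ (1+t)^(n-2i)` determined by the coefficients of `γ`. -/
noncomputable def gammaExpand {F : Type*} [Field F] (n : ℕ) (γ : F[X]) : F[X] :=
  ∑ i ∈ Finset.range (n / 2 + 1), C (γ.coeff i) * X ^ i * (1 + X) ^ (n - 2 * i)

/-- `natDegree ≤ n` rather than `degree = n`, so that the reduction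
`h ↦ (h - h₀ (1 + X) ^ (n + 2)) / X` stays in the class. -/
def IsReciprocal {R : Type*} [Semiring R] (n : ℕ) (p : R[X]) : Prop :=
  p.natDegree ≤ n ∧ ∀ i ≤ n, p.coeff i = p.coeff (n - i)

namespace IsReciprocal

variable {R : Type*}

theorem one_add_X_pow [Semiring R] (n : ℕ) : IsReciprocal n ((1 + X : R[X]) ^ n) := by
  refine ⟨natDegree_le_iff_coeff_eq_zero.mpr fun k hk => ?_, fun i hi => ?_⟩
  · rw [coeff_one_add_X_pow, Nat.choose_eq_zero_of_lt (by exact_mod_cast hk), Nat.cast_zero]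
  · rw [coeff_one_add_X_pow, coeff_one_add_X_pow, Nat.choose_symm hi]

theorem C_mul [Semiring R] {n : ℕ} {p : R[X]} (hp : IsReciprocal n p) (a : R) :
    IsReciprocal n (C a * p) :=
  ⟨natDegree_C_mul_le a p |>.trans hp.1, fun i hi => by simp only [coeff_C_mul, hp.2 i hi]⟩

theorem sub [Ring R] {n : ℕ} {p q : R[X]} (hp : IsReciprocal n p) (hq : IsReciprocal n q) :
    IsReciprocal n (p - q) :=
  ⟨natDegree_sub_le_iff_left hq.1 |>.mpr hp.1, fun i hi => by
    simp only [coeff_sub, hp.2 i hi, hq.2 i hi]⟩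

theorem divX [Semiring R] {n : ℕ} {p : R[X]} (hp : IsReciprocal (n + 2) p)
    (h0 : p.coeff 0 = 0) : IsReciprocal n p.divX := by
  have htop : p.coeff (n + 2) = 0 := by simpa [h0] using hp.2 (n + 2) le_rfl
  refine ⟨natDegree_le_iff_coeff_eq_zero.mpr fun k hk => ?_, fun i hi => ?_⟩
  · rw [coeff_divX]
    have hk : n < k := by exact_mod_cast hk
    rcases (Nat.succ_le_of_lt hk).eq_or_lt with rfl | hlt
    · exact htop
    · exact coeff_eq_zero_of_natDegree_lt (hp.1.trans_lt (by omega))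
  · rw [coeff_divX, coeff_divX, hp.2 (i + 1) (by omega)]
    congr 1
    omega

theorem eq_C_mul_one_add_X_pow [CommSemiring R] {n : ℕ} {p : R[X]}
    (hp : IsReciprocal n p) (hn : n < 2) : p = C (p.coeff 0) * (1 + X) ^ n := by
  interval_cases n
  · simpa using eq_C_of_natDegree_le_zero hp.1
  · have h10 : p.coeff 1 = p.coeff 0 := hp.2 1 le_rfl
    nth_rw 1 [eq_X_add_C_of_natDegree_le_one hp.1, h10]
    ring

end IsReciprocal

section

variable {F : Type*} [Field F]

theorem gammaExpand_of_lt_two {n : ℕ} (hn : n < 2) (γ : F[X]) :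
    gammaExpand n γ = C (γ.coeff 0) * (1 + X) ^ n := by
  simp [gammaExpand, Nat.div_eq_of_lt hn]

theorem gammaExpand_add_two (n : ℕ) (γ : F[X]) :
    gammaExpand (n + 2) γ = C (γ.coeff 0) * (1 + X) ^ (n + 2) + X * gammaExpand n γ.divX := by
  rw [gammaExpand, Nat.add_div_right n two_pos, Finset.sum_range_succ', add_comm,
    gammaExpand, Finset.mul_sum]
  congr 1
  · simp
  · refine Finset.sum_congr rfl fun i _ => ?_
    rw [coeff_divX, show n + 2 - 2 * (i + 1) = n - 2 * i by omega]
    ring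

theorem coeff_zero_gammaExpand (n : ℕ) (γ : F[X]) : (gammaExpand n γ).coeff 0 = γ.coeff 0 := by
  simp [gammaExpand, coeff_zero_eq_eval_zero, eval_finsetSum, Finset.sum_range_succ']

theorem gammaExpand_injOn :
    ∀ n : ℕ, Set.InjOn (gammaExpand (F := F) n) {γ | γ.natDegree ≤ n / 2}
  | 0, γ, hγ, δ, hδ, hγδ | 1, γ, hγ, δ, hδ, hγδ => by
    rw [eq_C_of_natDegree_le_zero hγ, eq_C_of_natDegree_le_zero hδ, ← coeff_zero_gammaExpand,
      hγδ, coeff_zero_gammaExpand]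
  | n + 2, γ, hγ, δ, hδ, hγδ => by
    have h0 : γ.coeff 0 = δ.coeff 0 := by
      rw [← coeff_zero_gammaExpand (n + 2), hγδ, coeff_zero_gammaExpand]
    have hdivX : γ.divX = δ.divX := by
      refine gammaExpand_injOn n ?_ ?_ ?_
      · simp only [Set.mem_ofPred_eq, natDegree_divX_eq_natDegree_tsub_one] at hγ ⊢; omega
      · simp only [Set.mem_ofPred_eq, natDegree_divX_eq_natDegree_tsub_one] at hδ ⊢; omega
      · rw [gammaExpand_add_two, gammaExpand_add_two, h0, add_right_inj] at hγδ
        exact mul_left_cancel₀ X_ne_zero hγδ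
    rw [← divX_mul_X_add γ, ← divX_mul_X_add δ, hdivX, h0]

theorem exists_gammaExpand (S : Subring F) :
    ∀ (n : ℕ) (h : F[X]), IsReciprocal n h → (∀ i, h.coeff i ∈ S) →
      ∃ γ : F[X], γ.natDegree ≤ n / 2 ∧ (∀ i, γ.coeff i ∈ S) ∧ h = gammaExpand n γ
  | 0, h, hh, hS | 1, h, hh, hS => by
    refine ⟨C (h.coeff 0), by simp, fun i => ?_, ?_⟩
    · rw [coeff_C]
      split_ifs
      exacts [hS 0, zero_mem S]
    · rw [gammaExpand_of_lt_two (by norm_num), coeff_C_zero]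
      exact hh.eq_C_mul_one_add_X_pow (by norm_num)
  | n + 2, h, hh, hS => by
    set c := h.coeff 0
    set h₁ := h - C c * (1 + X) ^ (n + 2)
    have hh₁ : IsReciprocal (n + 2) h₁ := hh.sub ((IsReciprocal.one_add_X_pow _).C_mul c)
    have hc₁ : h₁.coeff 0 = 0 := by simp [h₁, c, coeff_one_add_X_pow]
    obtain ⟨γ, hγ, hγS, hγh⟩ := exists_gammaExpand S n h₁.divX (hh₁.divX hc₁) fun i => by
      simp only [h₁, coeff_divX, coeff_sub, coeff_C_mul, coeff_one_add_X_pow]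
      exact sub_mem (hS _) (mul_mem (hS 0) (natCast_mem S _))
    have hdivX : (γ * X + C c).divX = γ := by ext i; simp [coeff_divX]
    refine ⟨γ * X + C c, ?_, ?_, ?_⟩
    · rw [Nat.add_div_right n two_pos]
      exact natDegree_add_le_of_degree_le (natDegree_mul_le.trans (add_le_add hγ natDegree_X_le))
        (by simp)
    · rintro (_ | i) <;> simp [coeff_C, hS, hγS, c]
    · have hX : X * h₁.divX = h₁ := by simpa [hc₁] using X_mul_divX_add h₁
      rw [gammaExpand_add_two, hdivX, ← hγh, hX]
      simp [h₁, c]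

end

theorem stmt_0_general {F : Type*} [Field F] (n : ℕ) (h : F[X])
    (hdeg : h.degree = n) (hrec : ∀ i ≤ n, h.coeff i = h.coeff (n - i)) :
    (∃! γ : F[X], γ.natDegree ≤ n / 2 ∧ h = gammaExpand n γ) ∧
    ((∀ i, ∃ z : ℤ, h.coeff i = (z : F)) →
      ∀ γ : F[X], γ.natDegree ≤ n / 2 ∧ h = gammaExpand n γ →
        ∀ i, ∃ z : ℤ, γ.coeff i = (z : F)) := by
  have hh : IsReciprocal n h := ⟨natDegree_le_of_degree_le hdeg.le, hrec⟩
  obtain ⟨γ, hγ, -, hγh⟩ := exists_gammaExpand ⊤ n h hh fun i => Subring.mem_top _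
  refine ⟨⟨γ, ⟨hγ, hγh⟩, fun δ ⟨hδ, hδh⟩ => gammaExpand_injOn n hδ hγ (hδh.symm.trans hγh)⟩, ?_⟩
  rintro hint δ ⟨hδ, hδh⟩ i
  obtain ⟨γ, hγ, hγℤ, hγh⟩ := exists_gammaExpand (Int.castRingHom F).range n h hh fun i =>
    (hint i).imp fun z hz => hz.symm
  rw [gammaExpand_injOn n hδ hγ (hδh.symm.trans hγh)]
  exact (hγℤ i).imp fun z hz => hz.symm

theorem stmt_0 {F : Type*} [Field F] [CharZero F] (n : ℕ) (h : F[X])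
    (hdeg : h.degree = n) (hrec : ∀ i ≤ n, h.coeff i = h.coeff (n - i)) :
    (∃! γ : F[X], γ.natDegree ≤ n / 2 ∧ h = gammaExpand n γ) ∧
    ((∀ i, ∃ z : ℤ, h.coeff i = (z : F)) →
      ∀ γ : F[X], γ.natDegree ≤ n / 2 ∧ h = gammaExpand n γ →
        ∀ i, ∃ z : ℤ, γ.coeff i = (z : F)) :=
  stmt_0_general n h hdeg hrec
end

section
/- If a simplicial complex X on a finite vertex set is Eulerian of dimension n-1, i.e. for every face σ (including the empty face) one has Σ_{τ ⊇ σ, τ ∈ X} (-1)^{#τ} = (-1)^n, then its f-polynomial f_X(t) = Σ_{σ∈X} t^{#σ} satisfies the Dehn–Sommerville relation f_X(t-1) = (-1)^n f_X(-t). -/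
/-- `X` is a (finite) simplicial complex: it contains the empty face and is
closed under taking subsets of faces. -/
def IsSimplicialComplex {V : Type*} [DecidableEq V] (X : Finset (Finset V)) : Prop :=
  ∅ ∈ X ∧ ∀ σ ∈ X, ∀ τ ⊆ σ, τ ∈ X

/-- The f-polynomial `f_X(t) = ∑_{σ ∈ X} t^{#σ}` (over ℤ). -/
noncomputable def fPoly {V : Type*} (X : Finset (Finset V)) : Polynomial ℤ :=
  ∑ σ ∈ X, Polynomial.X ^ σ.card

/-- The link of a face `σ`: all faces `τ` with `σ ∪ τ ∈ X` and `σ ∩ τ = ∅`. -/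
def link {V : Type*} [DecidableEq V] (X : Finset (Finset V)) (σ : Finset V) :
    Finset (Finset V) :=
  X.filter fun τ => σ ∪ τ ∈ X ∧ Disjoint σ τ

/-- `X` is flag: every set of vertices of `X` that is a clique of the
1-skeleton of `X` is a face of `X`. -/
def IsFlag {V : Type*} [DecidableEq V] (X : Finset (Finset V)) : Prop :=
  ∀ T : Finset V, (∀ v ∈ T, {v} ∈ X) →
    (∀ v ∈ T, ∀ w ∈ T, v ≠ w → ({v, w} : Finset V) ∈ X) → T ∈ X

/-! Expanding `(t - 1) ^ #σ = (-1) ^ #σ * ∑_{τ ⊆ σ} (-t) ^ #τ` and exchanging the two sums, which is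
possible because `X` is closed under subsets, the coefficient of `(-t) ^ #τ` becomes the Eulerian
sum `∑_{σ ⊇ τ} (-1) ^ #σ = (-1) ^ n`. -/

open Polynomial Finset

theorem Finset.sub_one_pow_card {α R : Type*} [CommRing R] (x : R) (s : Finset α) :
    (x - 1) ^ #s = (-1) ^ #s * ∑ t ∈ s.powerset, (-x) ^ #t := by
  calc (x - 1) ^ #s = (-1) ^ #s * ∏ _ ∈ s, (1 + -x) := by
        rw [prod_const, ← mul_pow]; ring
    _ = (-1) ^ #s * ∑ t ∈ s.powerset, (-x) ^ #t := by
        rw [prod_one_add]; simp only [prod_const]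

theorem Finset.sum_sum_powerset_comm_of_downClosed {α M : Type*} [DecidableEq α]
    [AddCommMonoid M] {X : Finset (Finset α)}
    (hX : ∀ σ ∈ X, ∀ τ ⊆ σ, τ ∈ X) (f : Finset α → Finset α → M) :
    ∑ σ ∈ X, ∑ τ ∈ σ.powerset, f σ τ = ∑ τ ∈ X, ∑ σ ∈ X with τ ⊆ σ, f σ τ :=
  sum_comm' fun σ τ => by
    simp only [mem_powerset, mem_filter]
    exact ⟨fun ⟨hσ, hτσ⟩ => ⟨⟨hσ, hτσ⟩, hX σ hσ τ hτσ⟩, fun ⟨⟨hσ, hτσ⟩, _⟩ => ⟨hσ, hτσ⟩⟩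

theorem fPoly_comp {V : Type*} (X : Finset (Finset V)) (p : ℤ[X]) :
    (fPoly X).comp p = ∑ σ ∈ X, p ^ #σ := by
  simp [fPoly]

theorem stmt_3 {V : Type*} [DecidableEq V] (n : ℕ) (X : Finset (Finset V))
    (hX : IsSimplicialComplex X)
    (heul : ∀ σ ∈ X, ∑ τ ∈ X.filter (fun τ => σ ⊆ τ), (-1 : ℤ) ^ τ.card = (-1) ^ n) :
    (fPoly X).comp (Polynomial.X - 1) = (-1) ^ n * (fPoly X).comp (-Polynomial.X) := by
  calc (fPoly X).comp (Polynomial.X - 1)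
        = ∑ σ ∈ X, ∑ τ ∈ σ.powerset, (-1) ^ #σ * (-Polynomial.X) ^ #τ := by
          simp only [fPoly_comp, sub_one_pow_card, mul_sum]
    _ = ∑ τ ∈ X, (∑ σ ∈ X with τ ⊆ σ, (-1) ^ #σ) * (-Polynomial.X) ^ #τ := by
          rw [sum_sum_powerset_comm_of_downClosed hX.2]
          simp only [sum_mul]
    _ = ∑ τ ∈ X, (-1) ^ n * (-Polynomial.X) ^ #τ := by
          refine sum_congr rfl fun τ hτ => ?_
          have h := congrArg (Int.cast : ℤ → ℤ[X]) (heul τ hτ)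
          push_cast at h
          rw [h]
    _ = (-1) ^ n * (fPoly X).comp (-Polynomial.X) := by
          rw [fPoly_comp, mul_sum]
end

section
/- If X is the edge subdivision Sub_η(X₀) of a simplicial complex X₀ along an edge η, and X₀ is flag, then Sub_η(X₀) is flag. -/
/-- Subdivision of `X₀` along the edge `{s, t}`, with new vertex `e`. -/
def edgeSub {V : Type*} [DecidableEq V] (X₀ : Finset (Finset V)) (s t e : V) :
    Finset (Finset V) :=
  X₀.filter (fun σ => ¬ ({s, t} : Finset V) ⊆ σ)
    ∪ (link X₀ {s, t}).image (fun σ => σ ∪ {e})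
    ∪ (link X₀ {s, t}).image (fun σ => σ ∪ {s, e})
    ∪ (link X₀ {s, t}).image (fun σ => σ ∪ {t, e})

/-! A clique `T` of the subdivision not containing `e` only uses faces of `X₀`, so it is a face
of `X₀` by flagness, and it cannot contain the removed edge `{s, t}`. If `e ∈ T`, every other
vertex `v` of `T` is joined to `e`, and the only faces of the subdivision containing `{v, e}` come
from faces of `X₀` containing `{s, t, v}`. Hence `{s, t} ∪ (T \ {e})` is a clique of `X₀`, thus a
face, and `T` is one of the cones `σ ∪ {e}`, `σ ∪ {s, e}`, `σ ∪ {t, e}` over the link face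
`σ = T \ {s, t, e}`. -/

open Finset

theorem isFlag_iff_forall_pair_mem {V : Type*} [DecidableEq V] {X : Finset (Finset V)} :
    IsFlag X ↔ ∀ T : Finset V, (∀ v ∈ T, ∀ w ∈ T, ({v, w} : Finset V) ∈ X) → T ∈ X := by
  refine ⟨fun hX T hT => hX T (fun v hv => ?_) fun v hv w hw _ => hT v hv w hw,
    fun hX T hvert hpair => hX T fun v hv w hw => ?_⟩
  · simpa using hT v hv v hv
  · obtain rfl | hvw := eq_or_ne v w
    · simpa using hvert v hv
    · exact hpair v hv w hw hvw

section edgeSub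

variable {V : Type*} [DecidableEq V] {X₀ : Finset (Finset V)} {s t e : V}

theorem mem_link_iff {σ τ : Finset V} :
    τ ∈ link X₀ σ ↔ τ ∈ X₀ ∧ σ ∪ τ ∈ X₀ ∧ Disjoint σ τ :=
  mem_filter

theorem mem_of_mem_edgeSub_of_notMem {τ : Finset V} (h : τ ∈ edgeSub X₀ s t e)
    (heτ : e ∉ τ) : τ ∈ X₀ ∧ ¬ ({s, t} : Finset V) ⊆ τ := by
  simp only [edgeSub, mem_union, mem_filter, mem_image] at h
  rcases h with ((h | ⟨σ, -, rfl⟩) | ⟨σ, -, rfl⟩) | ⟨σ, -, rfl⟩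
  · exact h
  all_goals simp at heτ

theorem pair_mem_of_mem_edgeSub {v w : V} (h : {v, w} ∈ edgeSub X₀ s t e) (hv : v ≠ e)
    (hw : w ≠ e) : {v, w} ∈ X₀ := by
  refine (mem_of_mem_edgeSub_of_notMem h ?_).1
  simp only [mem_insert, mem_singleton, not_or]
  exact ⟨hv.symm, hw.symm⟩

theorem insert_pair_mem_of_mem_edgeSub (hX : IsSimplicialComplex X₀) (he : ∀ σ ∈ X₀, e ∉ σ)
    {v : V} (hve : v ≠ e) (h : {v, e} ∈ edgeSub X₀ s t e) : insert v {s, t} ∈ X₀ := by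
  simp only [edgeSub, mem_union, mem_filter, mem_image] at h
  rcases h with ((h | ⟨σ, hσ, hστ⟩) | ⟨σ, hσ, hστ⟩) | ⟨σ, hσ, hστ⟩
  · exact absurd (by simp) (he _ h.1)
  all_goals
    refine hX.2 _ (mem_link_iff.1 hσ).2.1 _ (insert_subset ?_ subset_union_left)
    have hv : v ∈ _ := hστ ▸ mem_insert_self v {e}
    simp only [mem_union, mem_insert, mem_singleton, hve, or_false] at hv ⊢
    tauto

section clique

variable {T : Finset V} (hT : ∀ v ∈ T, ∀ w ∈ T, ({v, w} : Finset V) ∈ edgeSub X₀ s t e)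
include hT

theorem mem_edgeSub_of_notMem (hflag : IsFlag X₀) (hst : ¬ ({s, t} : Finset V) ⊆ T)
    (heT : e ∉ T) : T ∈ edgeSub X₀ s t e := by
  refine mem_union_left _ <| mem_union_left _ <| mem_union_left _ <| mem_filter.2 ⟨?_, hst⟩
  refine isFlag_iff_forall_pair_mem.1 hflag T fun v hv w hw => ?_
  exact pair_mem_of_mem_edgeSub (hT v hv w hw) (ne_of_mem_of_not_mem hv heT)
    (ne_of_mem_of_not_mem hw heT)

theorem pair_union_erase_mem (hX : IsSimplicialComplex X₀) (hflag : IsFlag X₀)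
    (hedge : ({s, t} : Finset V) ∈ X₀) (he : ∀ σ ∈ X₀, e ∉ σ) (heT : e ∈ T) :
    {s, t} ∪ T.erase e ∈ X₀ := by
  have hst_pair : ∀ x ∈ ({s, t} : Finset V), ∀ y ∈ {s, t} ∪ T.erase e, {x, y} ∈ X₀ := by
    intro x hx y hy
    rcases mem_union.1 hy with hy | hy
    · exact hX.2 _ hedge _ (insert_subset hx (singleton_subset_iff.2 hy))
    · have hyst := insert_pair_mem_of_mem_edgeSub hX he (ne_of_mem_erase hy)
        (hT y (mem_of_mem_erase hy) e heT)
      exact hX.2 _ hyst _ (insert_subset (mem_insert_of_mem hx) (by simp))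
  refine isFlag_iff_forall_pair_mem.1 hflag _ fun x hx y hy => ?_
  rcases mem_union.1 hx with hx | hx
  · exact hst_pair x hx y hy
  rcases mem_union.1 hy with hy | hy
  · exact pair_comm y x ▸ hst_pair y hy x (mem_union_right _ hx)
  exact pair_mem_of_mem_edgeSub (hT x (mem_of_mem_erase hx) y (mem_of_mem_erase hy))
    (ne_of_mem_erase hx) (ne_of_mem_erase hy)

theorem mem_edgeSub_of_mem (hX : IsSimplicialComplex X₀) (hflag : IsFlag X₀)
    (hedge : ({s, t} : Finset V) ∈ X₀) (he : ∀ σ ∈ X₀, e ∉ σ)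
    (hst : ¬ ({s, t} : Finset V) ⊆ T) (heT : e ∈ T) : T ∈ edgeSub X₀ s t e := by
  set σ := T.erase e \ {s, t}
  have hσ : σ ∈ link X₀ {s, t} := by
    have hU := pair_union_erase_mem hT hX hflag hedge he heT
    have hUσ : {s, t} ∪ σ = {s, t} ∪ T.erase e := union_sdiff_self_eq_union
    exact mem_link_iff.2 ⟨hX.2 _ hU _ (hUσ ▸ subset_union_right), hUσ ▸ hU, disjoint_sdiff⟩
  have hmem : ∀ x, x ∈ T ↔ x ∈ σ ∨ x = e ∨ (x = s ∧ s ∈ T) ∨ (x = t ∧ t ∈ T) := by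
    intro x
    simp only [σ, mem_sdiff, mem_erase, mem_insert, mem_singleton]
    grind
  simp only [edgeSub, mem_union, mem_image]
  by_cases hs : s ∈ T <;> by_cases ht : t ∈ T
  · exact absurd (insert_subset hs (singleton_subset_iff.2 ht)) hst
  · exact Or.inl (Or.inr ⟨σ, hσ, by ext; grind⟩)
  · exact Or.inr ⟨σ, hσ, by ext; grind⟩
  · exact Or.inl (Or.inl (Or.inr ⟨σ, hσ, by ext; grind⟩))

end clique

end edgeSub

theorem stmt_9_general {V : Type*} [DecidableEq V] (X₀ : Finset (Finset V)) (s t e : V)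
    (hX : IsSimplicialComplex X₀) (hflag : IsFlag X₀)
    (hedge : ({s, t} : Finset V) ∈ X₀)
    (he : ∀ σ ∈ X₀, e ∉ σ) :
    IsFlag (edgeSub X₀ s t e) := by
  refine isFlag_iff_forall_pair_mem.2 fun T hT => ?_
  have hst : ¬ ({s, t} : Finset V) ⊆ T := fun h =>
    (mem_of_mem_edgeSub_of_notMem (hT s (h (by simp)) t (h (by simp))) (he _ hedge)).2 subset_rfl
  by_cases heT : e ∈ T
  · exact mem_edgeSub_of_mem hT hX hflag hedge he hst heT
  · exact mem_edgeSub_of_notMem hT hflag hst heT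

theorem stmt_9 {V : Type*} [DecidableEq V] (X₀ : Finset (Finset V)) (s t e : V)
    (hX : IsSimplicialComplex X₀) (hflag : IsFlag X₀)
    (hst : s ≠ t) (hedge : ({s, t} : Finset V) ∈ X₀)
    (he : ∀ σ ∈ X₀, e ∉ σ) :
    IsFlag (edgeSub X₀ s t e) :=
  stmt_9_general X₀ s t e hX hflag hedge he
end

section
/- A sum of reciprocal polynomials of the form Σ_{i=0}^{⌊n/2⌋} γ_i t^i (1+t)^{n-2i} with all γ_i ≥ 0 and γ_0 > 0 is unimodal: writing h(t) = Σ_{j=0}^n h_j t^j, one has h_0 ≤ h_1 ≤ … ≤ h_{⌊n/2⌋}. -/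
open Polynomial

theorem coeff_X_pow_mul_one_add_X_pow {R : Type*} [Semiring R] (i m k : ℕ) :
    (X ^ i * (1 + X) ^ m : R[X]).coeff k = if i ≤ k then (m.choose (k - i) : R) else 0 := by
  rw [coeff_X_pow_mul', coeff_one_add_X_pow]

theorem coeff_X_pow_mul_one_add_X_pow_le_succ {R : Type*} [Semiring R] [PartialOrder R]
    [IsOrderedRing R] {i m j : ℕ} (hj : 2 * (j + 1) ≤ m + 2 * i) :
    (X ^ i * (1 + X) ^ m : R[X]).coeff j ≤ (X ^ i * (1 + X) ^ m : R[X]).coeff (j + 1) := by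
  simp only [coeff_X_pow_mul_one_add_X_pow]
  by_cases hij : i ≤ j
  · rw [if_pos hij, if_pos (by omega), show j + 1 - i = j - i + 1 by omega]
    exact Nat.mono_cast <| Nat.choose_le_succ_of_lt_half_left (n := m) (r := j - i) (by omega)
  · rw [if_neg hij]
    split_ifs <;> simp

theorem stmt_11_general (n : ℕ) (γ : ℕ → ℝ) (hγ : ∀ i, 0 ≤ γ i) :
    ∀ j : ℕ, j + 1 ≤ n / 2 →
      (∑ i ∈ Finset.range (n / 2 + 1), C (γ i) * X ^ i * (1 + X) ^ (n - 2 * i)).coeff j ≤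
      (∑ i ∈ Finset.range (n / 2 + 1), C (γ i) * X ^ i * (1 + X) ^ (n - 2 * i)).coeff (j + 1) := by
  intro j hj
  simp only [finsetSum_coeff, mul_assoc, coeff_C_mul]
  refine Finset.sum_le_sum fun i hi => mul_le_mul_of_nonneg_left ?_ (hγ i)
  have hi : 2 * i ≤ n := by
    rw [Finset.mem_range] at hi
    omega
  exact coeff_X_pow_mul_one_add_X_pow_le_succ (by omega)

theorem stmt_11 (n : ℕ) (γ : ℕ → ℝ) (hγ : ∀ i, 0 ≤ γ i) (h0 : 0 < γ 0) :
    ∀ j : ℕ, j + 1 ≤ n / 2 →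
      (∑ i ∈ Finset.range (n / 2 + 1), C (γ i) * X ^ i * (1 + X) ^ (n - 2 * i)).coeff j ≤
      (∑ i ∈ Finset.range (n / 2 + 1), C (γ i) * X ^ i * (1 + X) ^ (n - 2 * i)).coeff (j + 1) :=
  stmt_11_general n γ hγ
end

section
/- Let h be a reciprocal polynomial of degree n over ℝ and γ the polynomial with h(t) = (1+t)^n γ(t/(1+t)²). Then h has only real negative roots if and only if γ has only real negative roots. -/
open Polynomial

/-- `p` (a polynomial over `ℝ`) has only real negative roots (over `ℂ`). -/
def OnlyRealNegRoots (p : ℝ[X]) : Prop :=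
  ∀ z : ℂ, (p.map (algebraMap ℝ ℂ)).IsRoot z → ∃ r : ℝ, r < 0 ∧ z = (r : ℂ)

/-- If `t/(1+t)^2` is a negative real number, then `t` is real (and negative). -/
lemma quad_real_aux (w : ℝ) (hw : w < 0) (t : ℂ) (ht : (1:ℂ) + t ≠ 0)
    (heq : t / (1 + t) ^ 2 = (w : ℂ)) : ∃ r : ℝ, r < 0 ∧ t = (r : ℂ) := by
  have h1 : t = (w : ℂ) * (1 + t) ^ 2 := by
    rw [div_eq_iff (pow_ne_zero 2 ht)] at heq; exact heq
  obtain ⟨x, y⟩ := t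
  rw [Complex.ext_iff] at h1
  simp only [pow_two, Complex.mul_re, Complex.mul_im, Complex.add_re, Complex.add_im,
    Complex.one_re, Complex.one_im, Complex.ofReal_re, Complex.ofReal_im] at h1
  obtain ⟨e1, e2⟩ := h1
  rcases eq_or_ne y 0 with hy | hy
  · subst hy
    have hx : 1 + x ≠ 0 := by
      intro hx0
      apply ht
      rw [Complex.ext_iff]
      constructor <;> simp [hx0]
    have hxx : 0 < (1 + x) ^ 2 := by positivity
    refine ⟨x, ?_, ?_⟩
    · nlinarith [hxx]
    · rw [Complex.ext_iff]; simp
  · exfalso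
    have h3 : y * (2 * w * (1 + x) - 1) = 0 := by linear_combination -e2
    have h4 : 2 * w * (1 + x) = 1 := by
      rcases mul_eq_zero.mp h3 with h | h
      · exact absurd h hy
      · linarith
    have h5 : 1 + x < 0 := by nlinarith
    have h6 : y ^ 2 = 1 - x ^ 2 := by nlinarith [e1, h4]
    nlinarith [sq_pos_of_ne_zero hy]

/-- The key identity `h(t) = (1+t)^n · γ(t/(1+t)^2)` over `ℂ`, for `t ≠ -1`. -/
lemma key_id_aux (n : ℕ) (γ : ℝ[X]) (hγdeg : γ.natDegree ≤ n / 2)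
    (t : ℂ) (ht : (1:ℂ) + t ≠ 0) :
    ((∑ i ∈ Finset.range (n / 2 + 1),
      C (γ.coeff i) * X ^ i * (1 + X) ^ (n - 2 * i)).map (algebraMap ℝ ℂ)).eval t
      = (1 + t) ^ n * (γ.map (algebraMap ℝ ℂ)).eval (t / (1 + t) ^ 2) := by
  have hmapdeg : (γ.map (algebraMap ℝ ℂ)).natDegree < n / 2 + 1 :=
    lt_of_le_of_lt (le_trans natDegree_map_le hγdeg) (Nat.lt_succ_self _)
  rw [Polynomial.eval_eq_sum_range' hmapdeg]
  rw [Polynomial.map_sum, eval_finset_sum, Finset.mul_sum]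
  apply Finset.sum_congr rfl
  intro i hi
  have h2i : 2 * i ≤ n := by
    have := Finset.mem_range.mp hi
    omega
  simp only [Polynomial.map_mul, Polynomial.map_pow, Polynomial.map_add, map_C, map_X,
    Polynomial.map_one, eval_mul, eval_pow, eval_add, eval_C, eval_X, eval_one, coeff_map]
  rw [div_pow, ← pow_mul]
  have hne : (1 + t) ^ (2 * i) ≠ 0 := pow_ne_zero _ ht
  field_simp
  rw [mul_assoc, ← pow_add, Nat.sub_add_cancel h2i]

theorem stmt_13 (n : ℕ) (h γ : ℝ[X])
    (hdeg : h.degree = n)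
    (hrec : ∀ i ≤ n, h.coeff i = h.coeff (n - i))
    (hγdeg : γ.natDegree ≤ n / 2)
    (hexp : h = ∑ i ∈ Finset.range (n / 2 + 1),
      C (γ.coeff i) * X ^ i * (1 + X) ^ (n - 2 * i)) :
    OnlyRealNegRoots h ↔ OnlyRealNegRoots γ := by
  have key : ∀ t : ℂ, (1:ℂ) + t ≠ 0 →
      (h.map (algebraMap ℝ ℂ)).eval t
        = (1 + t) ^ n * (γ.map (algebraMap ℝ ℂ)).eval (t / (1 + t) ^ 2) := by
    intro t ht
    rw [hexp]
    exact key_id_aux n γ hγdeg t ht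
  constructor
  · intro H w hw
    rcases eq_or_ne w 0 with rfl | hw0
    · exfalso
      have h0 : (h.map (algebraMap ℝ ℂ)).IsRoot 0 := by
        have := key 0 (by norm_num)
        simp only [IsRoot] at hw ⊢
        rw [this]
        simp only [zero_div] at *
        rw [hw]
        ring
      obtain ⟨r, hr, hr0⟩ := H 0 h0
      have : r = 0 := by exact_mod_cast hr0.symm
      linarith
    · -- w ≠ 0 : solve the quadratic w t² + (2w-1) t + w = 0
      obtain ⟨s, hs⟩ := IsAlgClosed.exists_pow_nat_eq (k := ℂ) (1 - 4 * w) (by norm_num : 0 < 2)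
      set t : ℂ := ((1 - 2 * w) + s) / (2 * w) with htdef
      have hquad : w * t ^ 2 + (2 * w - 1) * t + w = 0 := by
        rw [htdef]
        field_simp
        ring_nf
        linear_combination hs
      have ht1 : (1 : ℂ) + t ≠ 0 := by
        intro h0
        have htm : t = -1 := by linear_combination h0
        rw [htm] at hquad
        have : (1 : ℂ) = 0 := by linear_combination hquad
        norm_num at this
      have hteq : t / (1 + t) ^ 2 = w := by
        rw [div_eq_iff (pow_ne_zero 2 ht1)]
        linear_combination -hquad
      have hroot : (h.map (algebraMap ℝ ℂ)).IsRoot t := by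
        simp only [IsRoot]
        rw [key t ht1, hteq]
        simp only [IsRoot] at hw
        rw [hw, mul_zero]
      obtain ⟨r, hr, hr0⟩ := H t hroot
      have hr1 : (1 : ℝ) + r ≠ 0 := by
        intro h0
        apply ht1
        rw [hr0]
        exact_mod_cast congrArg (fun x : ℝ => (x : ℂ)) h0
      refine ⟨r / (1 + r) ^ 2, ?_, ?_⟩
      · have : 0 < (1 + r) ^ 2 := by positivity
        exact div_neg_of_neg_of_pos hr this
      · rw [← hteq, hr0]
        push_cast
        ring
  · intro G t ht
    rcases eq_or_ne ((1:ℂ) + t) 0 with h1 | h1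
    · exact ⟨-1, by norm_num, by
        have : t = -1 := by linear_combination h1
        rw [this]; norm_num⟩
    · have h2 := key t h1
      simp only [IsRoot] at ht
      rw [ht] at h2
      have h3 : (γ.map (algebraMap ℝ ℂ)).eval (t / (1 + t) ^ 2) = 0 := by
        have hne : ((1:ℂ) + t) ^ n ≠ 0 := pow_ne_zero _ h1
        rcases mul_eq_zero.mp h2.symm with hz | hz
        · exact absurd hz hne
        · exact hz
      obtain ⟨r, hr, hr0⟩ := G _ h3
      exact quad_real_aux r hr t h1 hr0
end

section
/- A polynomial h(t) = 1 + h₁t + h₂t² + h₁t³ + t⁴ with real coefficients has only real negative roots if and only if h₂ − 2h₁ + 2 ≥ 0, h₁² − 4(h₂ − 2) ≥ 0, and h₁ ≥ 4. -/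
/-- A real quadratic `z^2 + p z + 1` with `p ≥ 2` has only real negative roots. -/
lemma quad_root_neg (p : ℝ) (hp : 2 ≤ p) (z : ℂ) (hz : z^2 + (p:ℂ)*z + 1 = 0) :
    ∃ r : ℝ, r < 0 ∧ z = (r : ℂ) := by
  have hD : (0:ℝ) ≤ p^2/4 - 1 := by nlinarith
  set c : ℝ := Real.sqrt (p^2/4 - 1) with hc
  have hc2 : c^2 = p^2/4 - 1 := Real.sq_sqrt hD
  have hc0 : 0 ≤ c := Real.sqrt_nonneg _
  have hclt : c < p/2 := by nlinarith
  have hc2C : (c:ℂ)^2 = (p:ℂ)^2/4 - 1 := by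
    have := congrArg (fun x : ℝ => (x : ℂ)) hc2
    push_cast at this; exact_mod_cast hc2
  have hfac : (z - ((-p/2 + c : ℝ) : ℂ)) * (z - ((-p/2 - c : ℝ) : ℂ)) = 0 := by
    push_cast
    linear_combination hz - hc2C
  rcases mul_eq_zero.mp hfac with h | h
  · exact ⟨-p/2 + c, by linarith, sub_eq_zero.mp h⟩
  · exact ⟨-p/2 - c, by linarith, sub_eq_zero.mp h⟩

theorem stmt_15 (h₁ h₂ : ℝ) :
    (∀ z : ℂ, 1 + (h₁:ℂ)*z + (h₂:ℂ)*z^2 + (h₁:ℂ)*z^3 + z^4 = 0 →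
      ∃ r : ℝ, r < 0 ∧ z = (r : ℂ)) ↔
    (h₂ - 2*h₁ + 2 ≥ 0 ∧ h₁^2 - 4*(h₂ - 2) ≥ 0 ∧ h₁ ≥ 4) := by
  constructor
  · intro H
    -- every root s of s² + h₁ s + (h₂ - 2) is real and ≤ -2
    have key : ∀ s : ℂ, s^2 + (h₁:ℂ)*s + ((h₂:ℝ):ℂ) - 2 = 0 →
        ∃ σ : ℝ, σ ≤ -2 ∧ s = (σ : ℂ) := by
      intro s hs
      obtain ⟨u, hu⟩ := IsAlgClosed.exists_pow_nat_eq (s^2 - 4) (n := 2) zero_lt_two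
      set z : ℂ := (s + u)/2 with hzdef
      have hz : z^2 - s*z + 1 = 0 := by
        rw [hzdef]; linear_combination hu/4
      have hP : 1 + (h₁:ℂ)*z + (h₂:ℂ)*z^2 + (h₁:ℂ)*z^3 + z^4 = 0 := by
        linear_combination (z^2 + (s + h₁)*z + 1) * hz + z^2 * hs
      obtain ⟨r, hr, hzr⟩ := H z hP
      have hrne : (r:ℂ) ≠ 0 := by
        exact_mod_cast Complex.ofReal_ne_zero.mpr (ne_of_lt hr)
      rw [hzr] at hz
      have hs' : s = (r:ℂ) + (r:ℂ)⁻¹ := by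
        field_simp
        linear_combination -hz
      refine ⟨r + r⁻¹, ?_, by rw [hs']; norm_cast⟩
      have hr0 : r ≠ 0 := ne_of_lt hr
      have : r * (r + r⁻¹ + 2) = (r+1)^2 := by field_simp; ring
      nlinarith [sq_nonneg (r+1)]
    set D : ℝ := h₁^2 - 4*(h₂ - 2) with hD
    obtain ⟨w, hw⟩ := IsAlgClosed.exists_pow_nat_eq ((D:ℂ)) (n := 2) zero_lt_two
    have hw' : w^2 = (h₁:ℂ)^2 - 4*((h₂:ℂ) - 2) := by
      rw [hw, hD]; push_cast; ring
    obtain ⟨σ₁, hσ₁, he₁⟩ := key ((-h₁ + w)/2) (by linear_combination hw'/4)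
    obtain ⟨σ₂, hσ₂, he₂⟩ := key ((-h₁ - w)/2) (by linear_combination hw'/4)
    have hsum : σ₁ + σ₂ = -h₁ := by
      have : ((σ₁ + σ₂ : ℝ) : ℂ) = ((-h₁ : ℝ) : ℂ) := by
        push_cast
        linear_combination -he₁ - he₂
      exact_mod_cast this
    have hdiff : (σ₁ - σ₂)^2 = D := by
      have : (((σ₁ - σ₂)^2 : ℝ) : ℂ) = (((h₁:ℝ)^2 - 4*(h₂ - 2) : ℝ) : ℂ) := by
        push_cast
        linear_combination hw' - ((σ₁:ℂ) - σ₂ + w) * he₁ + ((σ₁:ℂ) - σ₂ + w) * he₂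
      rw [hD]; exact_mod_cast this
    refine ⟨?_, ?_, by linarith⟩
    · nlinarith [mul_nonneg (by linarith : (0:ℝ) ≤ -σ₁ - 2) (by linarith : (0:ℝ) ≤ -σ₂ - 2)]
    · nlinarith [sq_nonneg (σ₁ - σ₂)]
  · rintro ⟨hγ₂, hDnn, hh₁⟩ z hz
    set D : ℝ := h₁^2 - 4*(h₂ - 2) with hD
    have hsq : Real.sqrt D ^ 2 = D := Real.sq_sqrt hDnn
    have hsle : Real.sqrt D ≤ h₁ - 4 := by
      have h1 : D ≤ (h₁ - 4)^2 := by nlinarith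
      calc Real.sqrt D ≤ Real.sqrt ((h₁-4)^2) := Real.sqrt_le_sqrt h1
        _ = h₁ - 4 := Real.sqrt_sq (by linarith)
    set p : ℝ := (h₁ + Real.sqrt D)/2 with hp
    set q : ℝ := (h₁ - Real.sqrt D)/2 with hq
    have hp2 : 2 ≤ p := by
      have := Real.sqrt_nonneg D
      rw [hp]; linarith
    have hq2 : 2 ≤ q := by rw [hq]; linarith
    have hpq : p + q = h₁ := by rw [hp, hq]; ring
    have hpqm : p * q = h₂ - 2 := by
      rw [hp, hq]
      nlinarith [hsq]
    have hfac : (z^2 + (p:ℂ)*z + 1) * (z^2 + (q:ℂ)*z + 1) = 0 := by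
      have h1 : ((p:ℝ):ℂ) + ((q:ℝ):ℂ) = ((h₁:ℝ):ℂ) := by exact_mod_cast hpq
      have h2 : ((p:ℝ):ℂ) * ((q:ℝ):ℂ) = ((h₂:ℝ):ℂ) - 2 := by exact_mod_cast hpqm
      linear_combination hz + (z^3 + z) * h1 + z^2 * h2
    rcases mul_eq_zero.mp hfac with h | h
    · exact quad_root_neg p hp2 z h
    · exact quad_root_neg q hq2 z h
end
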